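/- arXiv:cs/0210004 — 4 statements merged into one kernel-verified Lean document; each statement's English description precedes it below -/
import Mathlib

section
/- Let W be a set with a partial pre-order ≼ and M ⊆ W nonempty. Let ≼'' be the possibilistic revision of ≼ by M. Then Min(W, ≼'') = Min(M, ≼). -/
def strictPref {α : Type*} (r : α → α → Prop) (x y : α) : Prop := r x y ∧ ¬ r y x

def minSet {α : Type*} (r : α → α → Prop) (X : Set α) : Set α :=
  {x | x ∈ X ∧ ¬ ∃ y ∈ X, strictPref r y x}

def weakPref {α : Type*} (r : α → α → Prop) (X Y : Set α) : Prop :=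
  ∀ y ∈ minSet r Y, ∃ x ∈ minSet r X, strictPref r x y

def strongPref {α : Type*} (r : α → α → Prop) (X Y : Set α) : Prop :=
  ∃ x ∈ minSet r X, ∀ y ∈ minSet r Y, strictPref r x y

def hrev {α : Type*} (r : α → α → Prop) (M : Set α) (ω ω' : α) : Prop :=
  (ω ∈ M ∧ ω' ∈ M ∧ r ω ω') ∨ (ω ∉ M ∧ ω' ∉ M ∧ r ω ω') ∨ (ω ∈ M ∧ ω' ∉ M)

def prev {α : Type*} (r : α → α → Prop) (M : Set α) (ω ω' : α) : Prop :=
  (ω ∈ M ∧ ω' ∈ M ∧ r ω ω') ∨ (ω ∉ M ∧ ω' ∉ M) ∨ (ω ∈ M ∧ ω' ∉ M)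

def incomp {α : Type*} (r : α → α → Prop) (x y : α) : Prop := ¬ r x y ∧ ¬ r y x

theorem stmt6 {α : Type*} (r : α → α → Prop) (M : Set α)
    (hrefl : Reflexive r) (htrans : Transitive r) (hM : M.Nonempty) :
    minSet (prev r M) Set.univ = minSet r M := by
  obtain ⟨m, hm⟩ := hM
  ext x
  simp only [minSet, strictPref, prev, Set.mem_setOf_eq, Set.mem_univ, true_and]
  constructor
  · intro hx
    by_cases hxM : x ∈ M
    · refine ⟨hxM, ?_⟩
      rintro ⟨y, hyM, hyx, hxy⟩
      exact hx ⟨y, Or.inl ⟨hyM, hxM, hyx⟩,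
        fun h => by rcases h with ⟨_,_,h⟩|⟨h,_⟩|⟨_,h⟩ <;> tauto⟩
    · exact absurd (⟨m, Or.inr (Or.inr ⟨hm, hxM⟩),
        fun h => by rcases h with ⟨h,_⟩|⟨_,h⟩|⟨h,_⟩ <;> tauto⟩) hx
  · rintro ⟨hxM, hmin⟩
    rintro ⟨y, hyx, hxy⟩
    rcases hyx with ⟨hyM, _, hryx⟩ | ⟨hyM, hxM'⟩ | ⟨hyM, hxM'⟩
    · exact hmin ⟨y, hyM, hryx, fun h => hxy (Or.inl ⟨hxM, hyM, h⟩)⟩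
    · exact hxM' hxM
    · exact hxM' hxM
end

section
/- Let W be a finite set with a partial pre-order ≼. There exists a finite sequence of subsets M₁, …, Mₙ of W such that successively applying history-based revision by M₁, …, Mₙ to ≼ yields a total pre-order on W. -/
lemma hrev_refl {α : Type*} {r : α → α → Prop} (h : Reflexive r) (M : Set α) :
    Reflexive (hrev r M) := by
  intro x
  by_cases hx : x ∈ M
  · exact Or.inl ⟨hx, hx, h x⟩
  · exact Or.inr (Or.inl ⟨hx, hx, h x⟩)

lemma hrev_trans {α : Type*} {r : α → α → Prop} (h : Transitive r) (M : Set α) :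
    Transitive (hrev r M) := by
  intro x y z hxy hyz
  unfold hrev at *
  by_cases hx : x ∈ M <;> by_cases hy : y ∈ M <;> by_cases hz : z ∈ M <;>
    simp_all <;> exact h hxy hyz

lemma comp_hrev {α : Type*} {r : α → α → Prop} {x y : α}
    (h : r x y ∨ r y x) (M : Set α) : hrev r M x y ∨ hrev r M y x := by
  unfold hrev
  by_cases hx : x ∈ M <;> by_cases hy : y ∈ M <;> simp_all

lemma comp_foldl {α : Type*} {r : α → α → Prop} {x y : α}
    (h : r x y ∨ r y x) (L : List (Set α)) :
    L.foldl hrev r x y ∨ L.foldl hrev r y x := by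
  induction L generalizing r with
  | nil => exact h
  | cons M L ih => exact ih (comp_hrev h M)

lemma key {α : Type*} (r : α → α → Prop) (hr : Reflexive r) (ht : Transitive r)
    (l : List α) :
    Reflexive ((l.map (fun a => ({a} : Set α))).foldl hrev r) ∧
    Transitive ((l.map (fun a => ({a} : Set α))).foldl hrev r) ∧
    (∀ x ∈ l, ∀ y, (l.map (fun a => ({a} : Set α))).foldl hrev r x y ∨
      (l.map (fun a => ({a} : Set α))).foldl hrev r y x) := by
  induction l generalizing r with
  | nil => exact ⟨hr, ht, by simp⟩
  | cons a l ih =>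
    simp only [List.map_cons, List.foldl_cons]
    obtain ⟨h1, h2, h3⟩ := ih (hrev r {a}) (hrev_refl hr _) (hrev_trans ht _)
    refine ⟨h1, h2, ?_⟩
    intro x hx y
    rcases List.mem_cons.mp hx with h | hx
    · subst h
      apply comp_foldl
      by_cases hy : y ∈ ({x} : Set α)
      · rcases hy with rfl
        exact Or.inl (hrev_refl hr _ y)
      · exact Or.inl (Or.inr (Or.inr ⟨rfl, hy⟩))
    · exact h3 x hx y

theorem stmt10 {α : Type*} [Finite α] (r : α → α → Prop)
    (hrefl : Reflexive r) (htrans : Transitive r) :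
    ∃ L : List (Set α),
      Reflexive (L.foldl hrev r) ∧ Transitive (L.foldl hrev r) ∧
        (∀ ω ω', L.foldl hrev r ω ω' ∨ L.foldl hrev r ω' ω) := by
  have : Fintype α := Fintype.ofFinite α
  refine ⟨Finset.univ.toList.map (fun a => ({a} : Set α)), ?_⟩
  obtain ⟨h1, h2, h3⟩ := key r hrefl htrans Finset.univ.toList
  exact ⟨h1, h2, fun ω ω' => h3 ω (by simp) ω'⟩
end

section
/- History-based revision preserves comparabilities: if ω ≼ ω' in the original partial pre-order, then ω ≼' ω' or ω' ≼' ω in the revision ≼' by any M ⊆ W; moreover the number of incomparable pairs does not increase under history-based revision. -/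
theorem stmt11 {α : Type*} (r : α → α → Prop) (M : Set α)
    (hrefl : Reflexive r) (htrans : Transitive r) :
    (∀ ω ω', r ω ω' → hrev r M ω ω' ∨ hrev r M ω' ω) ∧
      {p : α × α | incomp (hrev r M) p.1 p.2} ⊆ {p : α × α | incomp r p.1 p.2} := by
  constructor
  · intro ω ω' h
    by_cases hω : ω ∈ M <;> by_cases hω' : ω' ∈ M
    · exact Or.inl (Or.inl ⟨hω, hω', h⟩)
    · exact Or.inl (Or.inr (Or.inr ⟨hω, hω'⟩))
    · exact Or.inr (Or.inr (Or.inr ⟨hω', hω⟩))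
    · exact Or.inl (Or.inr (Or.inl ⟨hω, hω', h⟩))
  · rintro ⟨x, y⟩ ⟨h1, h2⟩
    constructor
    · intro hxy
      by_cases hx : x ∈ M <;> by_cases hy : y ∈ M
      · exact h1 (Or.inl ⟨hx, hy, hxy⟩)
      · exact h1 (Or.inr (Or.inr ⟨hx, hy⟩))
      · exact h2 (Or.inr (Or.inr ⟨hy, hx⟩))
      · exact h1 (Or.inr (Or.inl ⟨hx, hy, hxy⟩))
    · intro hyx
      by_cases hx : x ∈ M <;> by_cases hy : y ∈ M
      · exact h2 (Or.inl ⟨hy, hx, hyx⟩)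
      · exact h1 (Or.inr (Or.inr ⟨hx, hy⟩))
      · exact h2 (Or.inr (Or.inr ⟨hy, hx⟩))
      · exact h2 (Or.inr (Or.inl ⟨hy, hx, hyx⟩))
end

section
/- Let W be a finite set, ≼ a partial pre-order on W, and M₁ ⊆ M₂ ⊆ W. Revising ≼ possibilistically first by M₂ and then by M₁ yields the same minimal elements of W as revising directly by M₁, provided M₁ is nonempty: Min(W, (≼ ∘ M₂) ∘ M₁) = Min(M₁, ≼). -/
theorem stmt16 {α : Type*} [Finite α] (r : α → α → Prop)
    (hrefl : Reflexive r) (htrans : Transitive r)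
    (M₁ M₂ : Set α) (hsub : M₁ ⊆ M₂) (hM₁ : M₁.Nonempty) :
    minSet (prev (prev r M₂) M₁) Set.univ = minSet r M₁ := by
  ext x
  simp only [minSet, Set.mem_setOf_eq, Set.mem_univ, true_and]
  constructor
  · intro h
    have hx : x ∈ M₁ := by
      by_contra hxn
      obtain ⟨w, hw⟩ := hM₁
      exact h ⟨w, Or.inr (Or.inr ⟨hw, hxn⟩),
        fun hxw => by
          rcases hxw with ⟨h1, _⟩ | ⟨_, h2⟩ | ⟨h1, _⟩ <;> [exact hxn h1; exact h2 hw; exact hxn h1]⟩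
    refine ⟨hx, fun ⟨y, hy, hryx, hnrxy⟩ => h ⟨y, ?_, ?_⟩⟩
    · exact Or.inl ⟨hy, hx, Or.inl ⟨hsub hy, hsub hx, hryx⟩⟩
    · rintro (⟨_, _, (⟨_, _, hrxy⟩ | ⟨h2, _⟩ | ⟨_, h2⟩)⟩ | ⟨h1, _⟩ | ⟨_, h2⟩)
      · exact hnrxy hrxy
      · exact h2 (hsub hx)
      · exact h2 (hsub hy)
      · exact h1 hx
      · exact h2 hy
  · rintro ⟨hx, hmin⟩ ⟨y, hRyx, hnRxy⟩
    by_cases hy : y ∈ M₁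
    · have hryx : r y x := by
        rcases hRyx with ⟨_, _, (⟨_, _, h3⟩ | ⟨h1, _⟩ | ⟨_, h2⟩)⟩ | ⟨h1, _⟩ | ⟨_, h2⟩
        · exact h3
        · exact absurd (hsub hy) h1
        · exact absurd (hsub hx) h2
        · exact absurd hy h1
        · exact absurd hx h2
      have hnrxy : ¬ r x y := fun hrxy =>
        hnRxy (Or.inl ⟨hx, hy, Or.inl ⟨hsub hx, hsub hy, hrxy⟩⟩)
      exact hmin ⟨y, hy, hryx, hnrxy⟩
    · rcases hRyx with ⟨h1, _⟩ | ⟨_, h2⟩ | ⟨h1, _⟩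
      · exact hy h1
      · exact h2 hx
      · exact hy h1
end
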